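/- Summability of Whitney cube diameters near a Lipschitz boundary (Lemma 4.3): For every n ≥ 1, K₀ > 0, C₀ ≥ 1 and q > n+1 there is C > 0 depending only on n, q, K₀, C₀ such that the following holds. Let φ : ℝ^{n−1}×ℝ → ℝ satisfy φ(0,0) = 0 and |φ(x',t) − φ(y',s)| ≤ K₀·(|x'−y'|²+|t−s|)^{1/2}, and set Ω := {(x',x_n,t) : x_n > φ(x',t)} and Γ := {(x',x_n,t) : x_n = φ(x',t)}. Let (Q_j) be a countable family of parabolic cubes with pairwise disjoint interiors such that each Q_j ⊂ Ω ∩ Q_{1/4} and C₀^{−1}·diam(Q_j) ≤ d_p(Q_j, Γ) ≤ C₀·diam(Q_j) for every j. Then Σ_j diam(Q_j)^q ≤ C. -/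

import Mathlib

open MeasureTheory Set
open scoped ENNReal

noncomputable section

/-- Points of the parabolic space `ℝⁿ × ℝ`. -/
abbrev Pt (n : ℕ) := EuclideanSpace ℝ (Fin n) × ℝ

/-- The parabolic norm `|(x,t)| = √(|x|² + |t|)` (its value for `t ≤ 0`; all uses below
are at points whose time component is nonpositive). -/
def pnorm {n : ℕ} (z : Pt n) : ℝ := Real.sqrt (‖z.1‖ ^ 2 + |z.2|)

/-- The parabolic distance `d_p((x,t),(y,s)) = √(|x-y|² + |t-s|)`. -/
def pdist {n : ℕ} (z w : Pt n) : ℝ := Real.sqrt (‖z.1 - w.1‖ ^ 2 + |z.2 - w.2|)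

/-- The parabolic cylinder `Q_r(z₀) = B_r(x₀) × (t₀ - r², t₀]`. -/
def pCyl {n : ℕ} (z₀ : Pt n) (r : ℝ) : Set (Pt n) :=
  {z | ‖z.1 - z₀.1‖ < r ∧ z₀.2 - r ^ 2 < z.2 ∧ z.2 ≤ z₀.2}

/-- Pucci's maximal operator `𝓜⁺(M) = Λ·Σ_{λᵢ>0} λᵢ + λ·Σ_{λᵢ<0} λᵢ`. -/
def pucciPlus {n : ℕ} (lam Lam : ℝ) (M : Matrix (Fin n) (Fin n) ℝ) : ℝ :=
  if hM : M.IsHermitian then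
    ∑ i, (if 0 < hM.eigenvalues i then Lam else lam) * hM.eigenvalues i
  else 0

/-- Pucci's minimal operator `𝓜⁻(M) = λ·Σ_{λᵢ>0} λᵢ + Λ·Σ_{λᵢ<0} λᵢ`. -/
def pucciMinus {n : ℕ} (lam Lam : ℝ) (M : Matrix (Fin n) (Fin n) ℝ) : ℝ :=
  if hM : M.IsHermitian then
    ∑ i, (if 0 < hM.eigenvalues i then lam else Lam) * hM.eigenvalues i
  else 0

/-- Euclidean dot product. -/
def dotp {n : ℕ} (x y : EuclideanSpace ℝ (Fin n)) : ℝ := ∑ i, x i * y i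

/-- `H` is the (entrywise, via iterated directional derivatives) spatial Hessian of `u`
at the point `z`. -/
def IsSpatialHessianAt {n : ℕ} (u : Pt n → ℝ) (H : Matrix (Fin n) (Fin n) ℝ) (z : Pt n) :
    Prop :=
  ∀ i j, HasLineDerivAt ℝ
    (fun x => lineDeriv ℝ (fun y => u (y, z.2)) x (EuclideanSpace.single j 1))
    (H i j) z.1 (EuclideanSpace.single i 1)

/-- `a` is the time derivative of `u` at `z`. -/
def IsTimeDerivAt {n : ℕ} (u : Pt n → ℝ) (a : ℝ) (z : Pt n) : Prop :=
  HasDerivAt (fun s => u (z.1, s)) a z.2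

/-- Classical membership in the Pucci class `S*(λ,Λ,f)` on `D`, with spatial Hessian `Hu`
and time derivative `ut`: `∂ₜu - 𝓜⁺(D²u) ≤ |f|` and `∂ₜu - 𝓜⁻(D²u) ≥ -|f|`. -/
def InPucciStar {n : ℕ} (lam Lam : ℝ) (f u : Pt n → ℝ)
    (Hu : Pt n → Matrix (Fin n) (Fin n) ℝ) (ut : Pt n → ℝ) (D : Set (Pt n)) : Prop :=
  ContinuousOn u D ∧
    ∀ z ∈ D, IsSpatialHessianAt u (Hu z) z ∧ IsTimeDerivAt u (ut z) z ∧
      ut z - pucciPlus lam Lam (Hu z) ≤ |f z| ∧ -|f z| ≤ ut z - pucciMinus lam Lam (Hu z)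

/-- Classical membership in the Pucci class `S(λ,Λ,0)` on `D`:
`𝓜⁻(D²u) ≤ ∂ₜu ≤ 𝓜⁺(D²u)`. -/
def InPucciZero {n : ℕ} (lam Lam : ℝ) (u : Pt n → ℝ)
    (Hu : Pt n → Matrix (Fin n) (Fin n) ℝ) (ut : Pt n → ℝ) (D : Set (Pt n)) : Prop :=
  ContinuousOn u D ∧
    ∀ z ∈ D, IsSpatialHessianAt u (Hu z) z ∧ IsTimeDerivAt u (ut z) z ∧
      pucciMinus lam Lam (Hu z) ≤ ut z ∧ ut z ≤ pucciPlus lam Lam (Hu z)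

/-- A Dini function: nondecreasing, nonnegative, with finite Dini integral. -/
def DiniFunction (ω : ℝ → ℝ) : Prop :=
  (∀ r, 0 ≤ ω r) ∧ MonotoneOn ω (Ici 0) ∧
    IntegrableOn (fun r => ω r / r) (Ioo (0 : ℝ) 1)

/-- The Dini integral `∫₀¹ ω(r)/r dr` plus `ω(1)`. -/
def diniNorm (ω : ℝ → ℝ) : ℝ := (∫ r in Ioo (0 : ℝ) 1, ω r / r) + ω 1

/-- The sup of `|u|` over `S` (the `L^∞` norm). -/
def supAbs {n : ℕ} (u : Pt n → ℝ) (S : Set (Pt n)) : ℝ := ⨆ z ∈ S, |u z|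

/-- The `L^p` norm of `f` over `S`. -/
def lpNorm {n : ℕ} (p : ℝ) (f : Pt n → ℝ) (S : Set (Pt n)) : ℝ :=
  (∫ z in S, |f z| ^ p) ^ p⁻¹

/-- The parabolic boundary of `Ω`. -/
def pBoundary {n : ℕ} (Ω : Set (Pt n)) : Set (Pt n) :=
  {z ∈ closure Ω | ∀ r > 0, ¬ pCyl z r ⊆ Ω}

/-- The bottom part of the parabolic boundary of `Ω`. -/
def pBotBoundary {n : ℕ} (Ω : Set (Pt n)) : Set (Pt n) :=
  {z ∈ pBoundary Ω | ∃ r > 0, pCyl z r ∩ Ω = ∅}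

/-- `f ∈ C^{-1,Dini}` at `z₀`, relative to `Ω`, with modulus `ω`. -/
def CMinusOneDiniAt {n : ℕ} (f : Pt n → ℝ) (Ω : Set (Pt n)) (ω : ℝ → ℝ) (z₀ : Pt n) :
    Prop :=
  ∀ r : ℝ, 0 < r → r < 1 →
    ((volume (Ω ∩ pCyl z₀ r)).toReal⁻¹ * ∫ z in Ω ∩ pCyl z₀ r, |f z| ^ ((n : ℝ) + 1))
        ^ (((n : ℝ) + 1)⁻¹) ≤ r⁻¹ * ω r

/-- The quantity `ρ = √(|x-x₀|² - ((x-x₀)·ν)² + |t-t₀|)`. -/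
def rho {n : ℕ} (z₀ : Pt n) (ν : EuclideanSpace ℝ (Fin n)) (z : Pt n) : ℝ :=
  Real.sqrt (‖z.1 - z₀.1‖ ^ 2 - dotp (z.1 - z₀.1) ν ^ 2 + |z.2 - z₀.2|)

/-- `Ω` satisfies the exterior `C^{1,Dini}` condition at `z₀` with modulus `ω`. -/
def ExtDiniAt {n : ℕ} (Ω : Set (Pt n)) (ω : ℝ → ℝ) (z₀ : Pt n) : Prop :=
  ∃ ν : EuclideanSpace ℝ (Fin n), ‖ν‖ = 1 ∧
    ∀ z ∈ pCyl z₀ 1, dotp (z.1 - z₀.1) ν < -(rho z₀ ν z * ω (rho z₀ ν z)) → z ∉ Ω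

/-- `g ∈ C^{1,Dini}` at `z₀` on `Γ`, with modulus `ω` and slope `l`. -/
def C1DiniAt {n : ℕ} (g : Pt n → ℝ) (Γ : Set (Pt n)) (ω : ℝ → ℝ) (z₀ : Pt n)
    (l : EuclideanSpace ℝ (Fin n)) : Prop :=
  ∀ z ∈ Γ ∩ pCyl z₀ 1,
    |g z - g z₀ - dotp l (z.1 - z₀.1)| ≤ pdist z z₀ * ω (pdist z z₀)

/-- `F` is uniformly elliptic with constants `λ, Λ`. -/
def UnifElliptic {n : ℕ} (lam Lam : ℝ) (F : Matrix (Fin n) (Fin n) ℝ → ℝ) : Prop :=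
  ∀ M N : Matrix (Fin n) (Fin n) ℝ, M.IsHermitian → N.IsHermitian →
    pucciMinus lam Lam M ≤ F (M + N) - F N ∧ F (M + N) - F N ≤ pucciPlus lam Lam M

/-- Frobenius norm of a matrix. -/
def frobNorm {n : ℕ} (M : Matrix (Fin n) (Fin n) ℝ) : ℝ :=
  Real.sqrt (∑ i, ∑ j, (M i j) ^ 2)

/-- The supergraph domain `{x_n > φ(x',t)}` of `φ` (dimension `n = m+1`). -/
def graphDomain (m : ℕ) (φ : (Fin m → ℝ) × ℝ → ℝ) : Set (Pt (m + 1)) :=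
  {z | φ (fun i => z.1 i.castSucc, z.2) < z.1 (Fin.last m)}

/-- The lateral graph boundary `{x_n = φ(x',t)}` of `φ`. -/
def graphBoundary (m : ℕ) (φ : (Fin m → ℝ) × ℝ → ℝ) : Set (Pt (m + 1)) :=
  {z | z.1 (Fin.last m) = φ (fun i => z.1 i.castSucc, z.2)}

/-- The upper-half parabolic cylinder `Q_r⁺(z₀)`. -/
def flatHalfCyl (m : ℕ) (z₀ : Pt (m + 1)) (r : ℝ) : Set (Pt (m + 1)) :=
  pCyl z₀ r ∩ {z | z₀.1 (Fin.last m) < z.1 (Fin.last m)}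

/-- The flat boundary piece `S_r(z₀)`. -/
def flatBase (m : ℕ) (z₀ : Pt (m + 1)) (r : ℝ) : Set (Pt (m + 1)) :=
  {z | z.1 (Fin.last m) = z₀.1 (Fin.last m) ∧ ‖z.1 - z₀.1‖ < r ∧
    z₀.2 - r ^ 2 < z.2 ∧ z.2 ≤ z₀.2}

/-- A parabolic cube with given center and half-side. -/
structure PCube (n : ℕ) where
  center : Pt n
  half : ℝ
  half_pos : 0 < half

/-- The underlying set `∏ᵢ [xᵢ-r, xᵢ+r] × [t-r², t+r²]` of a parabolic cube. -/
def PCube.toSet {n : ℕ} (Q : PCube n) : Set (Pt n) :=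
  {z | (∀ i, |z.1 i - Q.center.1 i| ≤ Q.half) ∧ |z.2 - Q.center.2| ≤ Q.half ^ 2}

/-- The `9/8`-dilate of a parabolic cube. -/
def PCube.dilate {n : ℕ} (Q : PCube n) : PCube n :=
  ⟨Q.center, (9 / 8) * Q.half, mul_pos (by norm_num) Q.half_pos⟩

/-- The parabolic diameter of a set. -/
def pdiam {n : ℕ} (A : Set (Pt n)) : ℝ := sSup (Set.image2 pdist A A)

/-- The parabolic distance between two sets. -/
def psetDist {n : ℕ} (A B : Set (Pt n)) : ℝ := sInf (Set.image2 pdist A B)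

/-- The parabolic distance from a point to a set. -/
def pdistToSet {n : ℕ} (z : Pt n) (A : Set (Pt n)) : ℝ := sInf ((pdist z) '' A)

end
/-!
A cube `Q` of half-side `r` in `Ω` with `d_p(Q, Γ) ≤ C₀ diam Q` lies, by the Lipschitz bound on `φ`,
in the layer `0 < x_n - φ(x', t) < A r` over the unit box, which has volume `O(r)` by Fubini.
Sorting the cubes by dyadic scale `2^{-k-1} < r ≤ 2^{-k}`, the disjoint interiors of the cubes of
scale `k`, each of volume `≳ 2^{-k(n+2)}`, fill a layer of volume `O(2^{-k})`; so these cubes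
contribute `O(2^{-k(q-n-1)})` to `Σ diam^q`, a convergent geometric series for `q > n + 1`.
-/

open Function Metric

theorem rpow_le_of_mem_dyadic {r p q : ℝ} {k : ℕ} (hr : 0 < r) (hpq : p < q + 1)
    (hk₁ : (2⁻¹ : ℝ) ^ (k + 1) < r) (hk₂ : r ≤ 2⁻¹ ^ k) :
    r ^ q ≤ (2⁻¹ ^ (q + 1 - p)) ^ k * (2 / 2⁻¹ ^ k) * r ^ p := by
  have h₁ : r ^ (q + 1 - p) ≤ (2⁻¹ ^ (q + 1 - p)) ^ k := by
    rw [← Real.rpow_natCast, ← Real.rpow_mul (by norm_num), mul_comm, Real.rpow_mul (by norm_num),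
      Real.rpow_natCast]
    exact Real.rpow_le_rpow hr.le hk₂ (by linarith)
  have h₂ : r⁻¹ ≤ 2 / 2⁻¹ ^ k := by
    rw [inv_le_comm₀ hr (by positivity), inv_div, div_eq_mul_inv, ← pow_succ]
    exact hk₁.le
  calc r ^ q = r ^ (q + 1 - p) * r⁻¹ * r ^ p := by
        rw [← Real.rpow_neg_one, ← Real.rpow_add hr, ← Real.rpow_add hr]
        ring_nf
    _ ≤ (2⁻¹ ^ (q + 1 - p)) ^ k * (2 / 2⁻¹ ^ k) * r ^ p := by gcongr

section Packing

variable {ι α : Type*} [MeasurableSpace α] {μ : Measure α} {s : ι → Set α} {r : ι → ℝ}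
  {c p q : ℝ}

theorem tsum_ofReal_rpow_le_of_dyadic_scale (hs : ∀ j, MeasurableSet (s j))
    (hd : Pairwise (Disjoint on s)) {E : Set α} (hsE : ∀ j, s j ⊆ E) {n : ℕ}
    (hr : ∀ j, 2⁻¹ ^ (n + 1) < r j ∧ r j ≤ 2⁻¹ ^ n) (hc : 0 < c) (hpq : p < q + 1)
    (hvol : ∀ j, ENNReal.ofReal (c * r j ^ p) ≤ μ (s j)) :
    ∑' j, ENNReal.ofReal (r j ^ q) ≤
      ENNReal.ofReal ((2⁻¹ ^ (q + 1 - p)) ^ n * (2 / 2⁻¹ ^ n) / c) * μ E := by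
  set a : ℝ := (2⁻¹ ^ (q + 1 - p)) ^ n * (2 / 2⁻¹ ^ n) / c with ha
  calc ∑' j, ENNReal.ofReal (r j ^ q) ≤ ∑' j, ENNReal.ofReal a * μ (s j) := by
        refine ENNReal.tsum_le_tsum fun j => ?_
        have hr₀ : 0 < r j := lt_trans (by positivity) (hr j).1
        calc ENNReal.ofReal (r j ^ q) ≤ ENNReal.ofReal (a * (c * r j ^ p)) := by
              refine ENNReal.ofReal_le_ofReal ((rpow_le_of_mem_dyadic hr₀ hpq (hr j).1
                (hr j).2).trans_eq ?_)
              rw [ha, ← mul_assoc, div_mul_cancel₀ _ hc.ne']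
          _ = ENNReal.ofReal a * ENNReal.ofReal (c * r j ^ p) := ENNReal.ofReal_mul (by positivity)
          _ ≤ ENNReal.ofReal a * μ (s j) := by gcongr; exact hvol j
    _ = ENNReal.ofReal a * ∑' j, μ (s j) := ENNReal.tsum_mul_left
    _ ≤ ENNReal.ofReal a * μ E := by
        gcongr
        exact (tsum_meas_le_meas_iUnion_of_disjoint μ hs hd).trans
          (measure_mono (iUnion_subset hsE))

theorem tsum_ofReal_rpow_le_of_pairwise_disjoint (hs : ∀ j, MeasurableSet (s j))
    (hd : Pairwise (Disjoint on s)) (hr₀ : ∀ j, 0 < r j) (hr₁ : ∀ j, r j ≤ 1)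
    (hc : 0 < c) (hpq : p < q + 1) (hvol : ∀ j, ENNReal.ofReal (c * r j ^ p) ≤ μ (s j))
    {E : ℝ → Set α} (hE : Monotone E) (hsE : ∀ j, s j ⊆ E (r j))
    {B : ℝ} (hμE : ∀ t, μ (E t) ≤ ENNReal.ofReal (B * t)) :
    ∑' j, ENNReal.ofReal (r j ^ q) ≤ ENNReal.ofReal (2 * B / c / (1 - 2⁻¹ ^ (q + 1 - p))) := by
  set x : ℝ := 2⁻¹ ^ (q + 1 - p)
  have hx₀ : 0 < x := by positivity
  have hx₁ : x < 1 := Real.rpow_lt_one (by norm_num) (by norm_num) (by linarith)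
  choose k hk using fun j => exists_nat_pow_near_of_lt_one (hr₀ j) (hr₁ j)
    (by norm_num : (0 : ℝ) < 2⁻¹) (by norm_num)
  have hscale (n : ℕ) : ∑' j : k ⁻¹' {n}, ENNReal.ofReal (r j ^ q) ≤
      ENNReal.ofReal (2 * B / c) * ENNReal.ofReal x ^ n := by
    have hkn (j : k ⁻¹' {n}) : k j = n := j.2
    calc ∑' j : k ⁻¹' {n}, ENNReal.ofReal (r j ^ q)
        ≤ ENNReal.ofReal (x ^ n * (2 / 2⁻¹ ^ n) / c) * μ (E (2⁻¹ ^ n)) :=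
          tsum_ofReal_rpow_le_of_dyadic_scale (s := fun j : k ⁻¹' {n} => s j) (r := fun j => r j)
            (fun j => hs j)
            (fun _ _ h => hd (Subtype.val_injective.ne h))
            (fun j => (hsE j).trans (hE ((hk j).2.trans_eq (by rw [hkn j]))))
            (fun j => by simpa only [hkn j] using hk j) hc hpq (fun j => hvol j)
      _ ≤ ENNReal.ofReal (x ^ n * (2 / 2⁻¹ ^ n) / c) * ENNReal.ofReal (B * 2⁻¹ ^ n) := by
          gcongr
          exact hμE _
      _ = ENNReal.ofReal (2 * B / c) * ENNReal.ofReal x ^ n := by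
          rw [← ENNReal.ofReal_mul (by positivity), ← ENNReal.ofReal_pow hx₀.le,
            ← ENNReal.ofReal_mul' (by positivity)]
          congr 1
          field_simp
  calc ∑' j, ENNReal.ofReal (r j ^ q)
      = ∑' n : ℕ, ∑' j : k ⁻¹' {n}, ENNReal.ofReal (r j ^ q) := (ENNReal.tsum_fiberwise _ k).symm
    _ ≤ ∑' n : ℕ, ENNReal.ofReal (2 * B / c) * ENNReal.ofReal x ^ n := ENNReal.tsum_le_tsum hscale
    _ = ENNReal.ofReal (2 * B / c / (1 - x)) := by
        rw [ENNReal.tsum_mul_left, ENNReal.tsum_geometric, div_eq_mul_inv (2 * B / c),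
          ENNReal.ofReal_mul' (inv_pos.2 (sub_pos.2 hx₁)).le, ← ENNReal.ofReal_one,
          ← ENNReal.ofReal_sub _ hx₀.le, ENNReal.ofReal_inv_of_pos (sub_pos.2 hx₁)]

end Packing

section Pdist

variable {n : ℕ}

theorem sq_pdist (z w : Pt n) : pdist z w ^ 2 = ‖z.1 - w.1‖ ^ 2 + |z.2 - w.2| :=
  Real.sq_sqrt (by positivity)

theorem norm_sub_le_pdist (z w : Pt n) : ‖z.1 - w.1‖ ≤ pdist z w :=
  (Real.le_sqrt (norm_nonneg _) (by positivity)).2 (le_add_of_nonneg_right (abs_nonneg _))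

theorem pdist_triangle (z a w : Pt n) : pdist z w ≤ pdist z a + pdist a w := by
  have hx : ‖z.1 - w.1‖ ≤ ‖z.1 - a.1‖ + ‖a.1 - w.1‖ := norm_sub_le_norm_sub_add_norm_sub _ _ _
  have ht : |z.2 - w.2| ≤ |z.2 - a.2| + |a.2 - w.2| := abs_sub_le _ _ _
  have hprod := mul_le_mul (norm_sub_le_pdist z a) (norm_sub_le_pdist a w) (norm_nonneg _)
    (Real.sqrt_nonneg _)
  refine Real.sqrt_le_iff.2 ⟨by unfold pdist; positivity, ?_⟩
  nlinarith [sq_pdist z a, sq_pdist a w, norm_nonneg (z.1 - w.1)]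

end Pdist

namespace PCube

variable {n : ℕ} (Q : PCube n)

theorem pdist_le {z w : Pt n} (hz : z ∈ Q.toSet) (hw : w ∈ Q.toSet) :
    pdist z w ≤ √(4 * n + 2) * Q.half := by
  obtain ⟨hz₁, hz₂⟩ := hz
  obtain ⟨hw₁, hw₂⟩ := hw
  have hx : ‖z.1 - w.1‖ ^ 2 ≤ n * (2 * Q.half) ^ 2 := by
    rw [EuclideanSpace.real_norm_sq_eq]
    calc ∑ i, (z.1 - w.1) i ^ 2 ≤ ∑ _i : Fin n, (2 * Q.half) ^ 2 := by
          refine Finset.sum_le_sum fun i _ => ?_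
          obtain ⟨hz₃, hz₄⟩ := abs_le.1 (hz₁ i)
          obtain ⟨hw₃, hw₄⟩ := abs_le.1 (hw₁ i)
          rw [PiLp.sub_apply]
          exact sq_le_sq' (by linarith) (by linarith)
      _ = n * (2 * Q.half) ^ 2 := by simp
  have ht : |z.2 - w.2| ≤ 2 * Q.half ^ 2 := by
    have := abs_le.1 hz₂
    have := abs_le.1 hw₂
    exact abs_le.2 ⟨by linarith, by linarith⟩
  calc pdist z w ≤ √((4 * n + 2) * Q.half ^ 2) := Real.sqrt_le_sqrt (by nlinarith)
    _ = √(4 * n + 2) * Q.half := by rw [Real.sqrt_mul (by positivity), Real.sqrt_sq Q.half_pos.le]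

theorem bddAbove_image2_pdist : BddAbove (image2 pdist Q.toSet Q.toSet) :=
  ⟨_, forall_mem_image2.2 fun _ hz _ hw => Q.pdist_le hz hw⟩

theorem pdist_le_pdiam {z w : Pt n} (hz : z ∈ Q.toSet) (hw : w ∈ Q.toSet) :
    pdist z w ≤ pdiam Q.toSet :=
  le_csSup Q.bddAbove_image2_pdist (mem_image2_of_mem hz hw)

theorem center_add_time_mem {s : ℝ} (hs : |s| ≤ Q.half ^ 2) :
    (Q.center.1, Q.center.2 + s) ∈ Q.toSet :=
  ⟨fun i => by simpa using Q.half_pos.le, by simpa using hs⟩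

theorem pdiam_le : pdiam Q.toSet ≤ √(4 * n + 2) * Q.half :=
  csSup_le ⟨_, mem_image2_of_mem (Q.center_add_time_mem (s := 0) (by simp; positivity))
      (Q.center_add_time_mem (s := 0) (by simp; positivity))⟩
    (forall_mem_image2.2 fun _ hz _ hw => Q.pdist_le hz hw)

theorem half_le_pdiam : Q.half ≤ pdiam Q.toSet := by
  have hr := Q.half_pos.le
  refine le_trans ?_ (Q.pdist_le_pdiam (Q.center_add_time_mem (s := Q.half ^ 2) (by simp))
    (Q.center_add_time_mem (s := -Q.half ^ 2) (by simp)))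
  refine (Real.le_sqrt hr (by positivity)).2 ?_
  simp only [sub_self, norm_zero, add_sub_add_left_eq_sub, sub_neg_eq_add]
  rw [abs_of_nonneg (by positivity)]
  nlinarith

theorem two_mul_half_sq_lt_of_subset_pCyl {z₀ : Pt n} {R : ℝ} (h : Q.toSet ⊆ pCyl z₀ R) :
    2 * Q.half ^ 2 < R ^ 2 := by
  have h₁ := (h (Q.center_add_time_mem (s := Q.half ^ 2) (by simp))).2.2
  have h₂ := (h (Q.center_add_time_mem (s := -Q.half ^ 2) (by simp))).2.1
  simp only at h₁ h₂
  linarith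

theorem ofReal_le_volume_interior :
    ENNReal.ofReal (2 ^ (n + 1) * Q.half ^ (n + 2)) ≤ volume (interior Q.toSet) := by
  set O : Set (Pt n) := (WithLp.ofLp ⁻¹' ball (WithLp.ofLp Q.center.1) Q.half) ×ˢ
    ball Q.center.2 (Q.half ^ 2)
  have hO : IsOpen O := (isOpen_ball.preimage (PiLp.continuous_ofLp _ _)).prod isOpen_ball
  have hOQ : O ⊆ Q.toSet := fun z ⟨hx, ht⟩ =>
    ⟨fun i => (dist_le_pi_dist _ _ i).trans (mem_ball.1 hx).le, (mem_ball.1 ht).le⟩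
  calc ENNReal.ofReal (2 ^ (n + 1) * Q.half ^ (n + 2)) = volume O := by
        rw [Measure.volume_eq_prod, Measure.prod_prod,
          (PiLp.volume_preserving_ofLp _).measure_preimage measurableSet_ball.nullMeasurableSet,
          Real.volume_pi_ball _ Q.half_pos, Real.volume_ball,
          ← ENNReal.ofReal_mul (by have := Q.half_pos; positivity)]
        congr 1
        simp only [Fintype.card_fin]
        ring
    _ ≤ volume (interior Q.toSet) := measure_mono (interior_maximal hOQ hO)

theorem pdiam_rpow_le {q : ℝ} (hq : 0 ≤ q) :
    pdiam Q.toSet ^ q ≤ √(4 * n + 2) ^ q * Q.half ^ q := by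
  rw [← Real.mul_rpow (by positivity) Q.half_pos.le]
  exact Real.rpow_le_rpow (Q.half_pos.le.trans Q.half_le_pdiam) Q.pdiam_le hq

end PCube

section Graph

variable {m : ℕ}

def IsParabolicLipschitz (K : ℝ) (φ : (Fin m → ℝ) × ℝ → ℝ) : Prop :=
  ∀ a b : (Fin m → ℝ) × ℝ, |φ a - φ b| ≤ K * √((∑ i, (a.1 i - b.1 i) ^ 2) + |a.2 - b.2|)

def graphHeight (φ : (Fin m → ℝ) × ℝ → ℝ) (z : Pt (m + 1)) : ℝ :=
  z.1 (Fin.last m) - φ (fun i => z.1 i.castSucc, z.2)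

theorem graphBoundary_nonempty (φ : (Fin m → ℝ) × ℝ → ℝ) : (graphBoundary m φ).Nonempty :=
  ⟨(EuclideanSpace.single (Fin.last m) (φ (0, 0)), 0), by
    simp only [graphBoundary, mem_ofPred_eq, PiLp.single_eq_same, ne_eq, Fin.castSucc_ne_last,
      not_false_eq_true, PiLp.single_eq_of_ne]
    rfl⟩

theorem graphHeight_eq_zero_of_mem {φ : (Fin m → ℝ) × ℝ → ℝ} {z : Pt (m + 1)}
    (hz : z ∈ graphBoundary m φ) : graphHeight φ z = 0 :=
  sub_eq_zero.2 hz

namespace IsParabolicLipschitz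

variable {K : ℝ} {φ : (Fin m → ℝ) × ℝ → ℝ}

theorem continuous (hφ : IsParabolicLipschitz K φ) : Continuous φ := by
  refine continuous_iff_continuousAt.2 fun b => ?_
  have hd : Continuous fun a : (Fin m → ℝ) × ℝ =>
      K * √((∑ i, (a.1 i - b.1 i) ^ 2) + |a.2 - b.2|) := by fun_prop
  have h₀ := hd.tendsto b
  simp only [sub_self, ne_eq, OfNat.ofNat_ne_zero, not_false_eq_true, zero_pow,
    Finset.sum_const_zero, abs_zero, add_zero, Real.sqrt_zero, mul_zero] at h₀
  exact tendsto_iff_norm_sub_tendsto_zero.2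
    (squeeze_zero_norm (fun a => by simpa using hφ a b) h₀)

theorem abs_graphHeight_sub_le (hφ : IsParabolicLipschitz K φ) (hK : 0 ≤ K) (z w : Pt (m + 1)) :
    |graphHeight φ z - graphHeight φ w| ≤ (1 + K) * pdist z w := by
  have hlast : |z.1 (Fin.last m) - w.1 (Fin.last m)| ≤ pdist z w := by
    simpa using (PiLp.norm_apply_le (z.1 - w.1) (Fin.last m)).trans (norm_sub_le_pdist z w)
  have hinit : √((∑ i : Fin m, (z.1 i.castSucc - w.1 i.castSucc) ^ 2) + |z.2 - w.2|) ≤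
      pdist z w := by
    refine Real.sqrt_le_sqrt (add_le_add_left ?_ _)
    rw [EuclideanSpace.real_norm_sq_eq, Fin.sum_univ_castSucc]
    simp only [PiLp.sub_apply]
    exact le_add_of_nonneg_right (sq_nonneg _)
  calc |graphHeight φ z - graphHeight φ w|
      ≤ |z.1 (Fin.last m) - w.1 (Fin.last m)| +
          |φ (fun i => z.1 i.castSucc, z.2) - φ (fun i => w.1 i.castSucc, w.2)| := by
        rw [graphHeight, graphHeight, sub_sub_sub_comm]
        exact abs_sub _ _
    _ ≤ pdist z w + K * pdist z w := add_le_add hlast ((hφ _ _).trans (by gcongr))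
    _ = (1 + K) * pdist z w := by ring

theorem graphHeight_le_pdiam_add_psetDist
    (hφ : IsParabolicLipschitz K φ) (hK : 0 ≤ K) {S : Set (Pt (m + 1))}
    (hS : BddAbove (image2 pdist S S)) {z : Pt (m + 1)} (hz : z ∈ S) :
    graphHeight φ z ≤ (1 + K) * (pdiam S + psetDist S (graphBoundary m φ)) := by
  have hK₁ : 0 < 1 + K := by linarith
  refine le_of_forall_pos_lt_add fun ε hε => ?_
  obtain ⟨_, ⟨a, ha, b, hb, rfl⟩, hab⟩ := Real.lt_sInf_add_pos
    ((Set.nonempty_of_mem hz).image2 (graphBoundary_nonempty φ)) (div_pos hε hK₁)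
  calc graphHeight φ z = graphHeight φ z - graphHeight φ b := by
        rw [graphHeight_eq_zero_of_mem hb, sub_zero]
    _ ≤ (1 + K) * pdist z b := (le_abs_self _).trans (hφ.abs_graphHeight_sub_le hK z b)
    _ ≤ (1 + K) * (pdist z a + pdist a b) := by gcongr; exact pdist_triangle z a b
    _ < (1 + K) * (pdiam S + (psetDist S (graphBoundary m φ) + ε / (1 + K))) := by
        gcongr ?_ * ?_
        exact add_lt_add_of_le_of_lt (le_csSup hS (mem_image2_of_mem hz ha)) hab
    _ = (1 + K) * (pdiam S + psetDist S (graphBoundary m φ)) + ε := by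
        field_simp
        ring

end IsParabolicLipschitz

def splitLast (z : Pt (m + 1)) : ((Fin m → ℝ) × ℝ) × ℝ :=
  ((fun i => z.1 i.castSucc, z.2), z.1 (Fin.last m))

theorem measurePreserving_splitLast : MeasurePreserving (splitLast (m := m)) := by
  have h₁ : MeasurePreserving (fun z : Pt (m + 1) => (WithLp.ofLp z.1, z.2)) :=
    (PiLp.volume_preserving_ofLp _).prod (MeasurePreserving.id volume)
  have h₂ := (volume_preserving_piFinSuccAbove (fun _ : Fin (m + 1) => ℝ) (Fin.last m)).prod
    (MeasurePreserving.id (volume : Measure ℝ))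
  have h₃ := measurePreserving_prodAssoc (volume : Measure ℝ) (volume : Measure (Fin m → ℝ))
    (volume : Measure ℝ)
  convert Measure.measurePreserving_swap.comp (h₃.comp (h₂.comp h₁)) using 1
  · ext z i <;>
      simp [splitLast, MeasurableEquiv.piFinSuccAbove, MeasurableEquiv.prodAssoc, Fin.init]
  · rfl

def graphLayer (φ : (Fin m → ℝ) × ℝ → ℝ) (h : ℝ) : Set (Pt (m + 1)) :=
  splitLast ⁻¹' regionBetween φ (fun y => φ y + h) (Icc (-1) 1 ×ˢ Icc (-1) 1)

theorem mem_graphLayer {φ : (Fin m → ℝ) × ℝ → ℝ} {h : ℝ} {z : Pt (m + 1)} :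
    z ∈ graphLayer φ h ↔ ((∀ i : Fin m, |z.1 i.castSucc| ≤ 1) ∧ |z.2| ≤ 1) ∧
      0 < graphHeight φ z ∧ graphHeight φ z < h := by
  simp only [graphLayer, regionBetween, Icc_prod_Icc, mem_Icc, mem_Ioo, preimage_ofPred_eq,
    splitLast, Prod.mk_le_mk, Pi.le_def, Pi.neg_apply, Pi.one_apply, mem_ofPred_eq, abs_le,
    forall_and, graphHeight, sub_pos, sub_lt_iff_lt_add']
  tauto

theorem graphLayer_mono (φ : (Fin m → ℝ) × ℝ → ℝ) : Monotone (graphLayer φ) :=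
  fun _ _ hh _ hz => ⟨hz.1, hz.2.1, hz.2.2.trans_le (by simp only [add_le_add_iff_left, hh])⟩

theorem volume_graphLayer_le {φ : (Fin m → ℝ) × ℝ → ℝ} (hφ : Measurable φ) (h : ℝ) :
    volume (graphLayer φ h) ≤ ENNReal.ofReal (2 ^ (m + 1) * h) := by
  refine (measurePreserving_splitLast.measure_preimage_le _).trans_eq ?_
  rw [Measure.volume_eq_prod, volume_regionBetween_eq_lintegral' hφ (hφ.add_const h)
    (measurableSet_Icc.prod measurableSet_Icc)]
  simp only [Pi.sub_apply, add_sub_cancel_left, setLIntegral_const, Measure.volume_eq_prod,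
    Measure.prod_prod, Real.volume_Icc_pi, Real.volume_Icc, Pi.one_apply, Pi.neg_apply,
    Finset.prod_const, Finset.card_univ, Fintype.card_fin]
  rw [← ENNReal.ofReal_pow (by norm_num), ← ENNReal.ofReal_mul (by positivity),
    ← ENNReal.ofReal_mul' (by positivity)]
  ring_nf

end Graph

theorem PCube.toSet_subset_graphLayer {m : ℕ} {K C₀ : ℝ} {φ : (Fin m → ℝ) × ℝ → ℝ}
    (hφ : IsParabolicLipschitz K φ) (hK : 0 ≤ K) (hC₀ : 0 ≤ C₀) (Q : PCube (m + 1))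
    (hQ : Q.toSet ⊆ graphDomain m φ ∩ pCyl 0 (1 / 4))
    (hW : psetDist Q.toSet (graphBoundary m φ) ≤ C₀ * pdiam Q.toSet) :
    Q.toSet ⊆ graphLayer φ ((1 + K) * (2 + C₀) * √(4 * ↑(m + 1) + 2) * Q.half) := by
  intro z hz
  obtain ⟨hzΩ, hz₁, hz₂, hz₃⟩ := hQ hz
  simp only [Prod.fst_zero, Prod.snd_zero, sub_zero] at hz₁ hz₂ hz₃
  have hr := Q.half_pos
  have hD := Q.half_le_pdiam
  refine mem_graphLayer.2 ⟨⟨fun i => ?_, abs_le.2 ⟨by linarith, by linarith⟩⟩, sub_pos.2 hzΩ, ?_⟩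
  · exact ((PiLp.norm_apply_le z.1 _).trans hz₁.le).trans (by norm_num)
  · have hpos : 0 < (1 + K) * (√(4 * ↑(m + 1) + 2) * Q.half) := by positivity
    calc graphHeight φ z ≤ (1 + K) * (pdiam Q.toSet + psetDist Q.toSet (graphBoundary m φ)) :=
          hφ.graphHeight_le_pdiam_add_psetDist hK Q.bddAbove_image2_pdist hz
      _ ≤ (1 + K) * ((1 + C₀) * (√(4 * ↑(m + 1) + 2) * Q.half)) := by
          gcongr
          nlinarith [Q.pdiam_le]
      _ < (1 + K) * (2 + C₀) * √(4 * ↑(m + 1) + 2) * Q.half := by nlinarith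

/-- **Summability of Whitney cube diameters near a Lipschitz boundary** (Lemma 4.3): if a
countable family of parabolic cubes with pairwise disjoint interiors lies in `Ω ∩ Q_{1/4}`
and each cube is Whitney-comparable to its distance from the lateral boundary `Γ`, then
`Σ_j diam(Q_j)^q ≤ C` for any `q > n + 1`.  Here `n = m + 1 ≥ 1`. -/
theorem whitney_diam_sum
    (m : ℕ) (K₀ C₀ q : ℝ) (hK₀ : 0 < K₀) (hC₀ : 1 ≤ C₀) (hq : (m : ℝ) + 2 < q) :
    ∃ C : ℝ, 0 < C ∧
      ∀ (φ : (Fin m → ℝ) × ℝ → ℝ),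
        φ (0, 0) = 0 →
        (∀ a b : (Fin m → ℝ) × ℝ,
          |φ a - φ b| ≤ K₀ * Real.sqrt ((∑ i, (a.1 i - b.1 i) ^ 2) + |a.2 - b.2|)) →
        ∀ (ι : Type) (_ : Countable ι) (Q : ι → PCube (m + 1)),
          (∀ j, (Q j).toSet ⊆ graphDomain m φ ∩ pCyl (0 : Pt (m + 1)) (1 / 4)) →
          (∀ j k, j ≠ k → interior (Q j).toSet ∩ interior (Q k).toSet = ∅) →
          (∀ j, C₀⁻¹ * pdiam (Q j).toSet ≤ psetDist (Q j).toSet (graphBoundary m φ) ∧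
                psetDist (Q j).toSet (graphBoundary m φ) ≤ C₀ * pdiam (Q j).toSet) →
          ∑' j, ENNReal.ofReal (pdiam (Q j).toSet ^ q) ≤ ENNReal.ofReal C := by
  set cn : ℝ := √(4 * ↑(m + 1) + 2)
  set A : ℝ := (1 + K₀) * (2 + C₀) * cn
  set P : ℝ := 2 * (2 ^ (m + 1) * A) / 2 ^ (m + 2) / (1 - 2⁻¹ ^ (q + 1 - ↑(m + 3)))
  have hq₀ : 0 < q := by linarith [(m.cast_nonneg : (0 : ℝ) ≤ m)]
  have hP : 0 < P := div_pos (by positivity) (sub_pos.2 (Real.rpow_lt_one (by norm_num)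
    (by norm_num) (by push_cast; linarith)))
  refine ⟨cn ^ q * P, by positivity, fun φ _ hφ ι _ Q hQ hdisj hW => ?_⟩
  replace hφ : IsParabolicLipschitz K₀ φ := hφ
  have hpack : ∑' j, ENNReal.ofReal ((Q j).half ^ q) ≤ ENNReal.ofReal P :=
    tsum_ofReal_rpow_le_of_pairwise_disjoint (μ := volume) (E := fun t => graphLayer φ (A * t))
      (fun j => isOpen_interior.measurableSet)
      (fun j k hjk => disjoint_iff_inter_eq_empty.2 (hdisj j k hjk))
      (fun j => (Q j).half_pos)
      (fun j => by
        nlinarith [(Q j).two_mul_half_sq_lt_of_subset_pCyl fun z hz => (hQ j hz).2, (Q j).half_pos])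
      (by positivity) (by push_cast; linarith)
      (fun j => by rw [Real.rpow_natCast]; exact (Q j).ofReal_le_volume_interior)
      (fun _ _ h => graphLayer_mono φ (by gcongr))
      (fun j => interior_subset.trans
        ((Q j).toSet_subset_graphLayer hφ hK₀.le (by linarith) (hQ j) (hW j).2))
      (fun t => (volume_graphLayer_le hφ.continuous.measurable _).trans_eq (by ring_nf))
  calc ∑' j, ENNReal.ofReal (pdiam (Q j).toSet ^ q)
      ≤ ∑' j, ENNReal.ofReal (cn ^ q) * ENNReal.ofReal ((Q j).half ^ q) := by
        refine ENNReal.tsum_le_tsum fun j => ?_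
        rw [← ENNReal.ofReal_mul (by positivity)]
        exact ENNReal.ofReal_le_ofReal ((Q j).pdiam_rpow_le hq₀.le)
    _ = ENNReal.ofReal (cn ^ q) * ∑' j, ENNReal.ofReal ((Q j).half ^ q) := ENNReal.tsum_mul_left
    _ ≤ ENNReal.ofReal (cn ^ q) * ENNReal.ofReal P := by gcongr
    _ = ENNReal.ofReal (cn ^ q * P) := (ENNReal.ofReal_mul (by positivity)).symm
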